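/- arXiv:2207.12057 — 6 statements merged into one kernel-verified Lean document; each statement's English description precedes it below -/
import Mathlib

section
/- Let R be a commutative ring with 1 and n ≥ 3. Suppose every matrix in the elementary subgroup E_{n-1}(R) can be written as a product of L matrices that are alternately lower and upper unitriangular (starting with a lower unitriangular one). Then every matrix in the elementary subgroup E_n(R) can be written as a product of L matrices that are alternately lower and upper unitriangular (starting with a lower unitriangular one). -/
/-- `M` is an elementary matrix `1 + r • E i j` with `i ≠ j`. -/
def IsElementary {R : Type*} [CommRing R] {m : ℕ}
    (M : Matrix (Fin m) (Fin m) R) : Prop :=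
  ∃ i j : Fin m, ∃ r : R, i ≠ j ∧ M = 1 + Matrix.single i j r

/-- `M` belongs to the elementary subgroup `E_m(R)`, i.e. it is a finite product of
elementary matrices (the generating set is symmetric, so this is the generated subgroup). -/
def MemElemGroup {R : Type*} [CommRing R] {m : ℕ}
    (M : Matrix (Fin m) (Fin m) R) : Prop :=
  ∃ l : List (Matrix (Fin m) (Fin m) R), (∀ A ∈ l, IsElementary A) ∧ l.prod = M

/-- `M` is lower unitriangular. -/
def IsLowerUnitriangular {R : Type*} [CommRing R] {m : ℕ}
    (M : Matrix (Fin m) (Fin m) R) : Prop :=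
  (∀ i, M i i = 1) ∧ ∀ i j : Fin m, i < j → M i j = 0

/-- `M` is upper unitriangular. -/
def IsUpperUnitriangular {R : Type*} [CommRing R] {m : ℕ}
    (M : Matrix (Fin m) (Fin m) R) : Prop :=
  (∀ i, M i i = 1) ∧ ∀ i j : Fin m, j < i → M i j = 0

/-- `M` is a product of `L` matrices which are alternately lower and upper unitriangular,
starting with a lower unitriangular one. -/
def HasAltUnitriangularFactorization {R : Type*} [CommRing R] {m : ℕ} (L : ℕ)
    (M : Matrix (Fin m) (Fin m) R) : Prop :=
  ∃ f : Fin L → Matrix (Fin m) (Fin m) R,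
    (∀ k : Fin L, if k.1 % 2 = 0 then IsLowerUnitriangular (f k)
      else IsUpperUnitriangular (f k)) ∧
    (List.ofFn f).prod = M

/-!
Embed `E_m` into `E_{m+1}` in two ways, `ι₀ g = diag(1, g)` and `ιₘ g = diag(g, 1)`. For either
embedding `ι`, every lower (upper) unitriangular matrix is `z * ι w` with `w` lower (upper)
unitriangular of size `m` and `z` in a set `Z` of matrices that differ from `1` only off the
diagonal of one row or one column; `Z` is normalised by `ι(GL_m)`. Moving the factors `ι w_k`
to the right shows that the set of products of `L` alternating unitriangular factors equals
`Z₁ ⋯ Z_L * ι(S_m)`, where `S_m` is the same set in size `m`. By hypothesis `S_m = E_m`, so this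
set is stable under right multiplication by `ι(E_m)` for both embeddings. For `m ≥ 2` the two
copies of `E_m` contain every elementary matrix except `e_{0m}(c)` and `e_{m0}(c)`, which are
commutators of elementary matrices lying in them; hence the set contains `E_{m+1}`.
-/

open Matrix Pointwise

section NormalizedFactors

variable {G H : Type*} [Monoid G] [Group H] (φ : H →* G)

theorem image_mul_eq_mul_image {N : Set G} (hN : ∀ h, ∀ z ∈ N, φ h⁻¹ * z * φ h ∈ N)
    (A : Set H) : φ '' A * N = N * φ '' A := by
  have hinv_mul : ∀ h, φ h⁻¹ * φ h = 1 := fun h => by rw [← map_mul, inv_mul_cancel, map_one]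
  have hmul_inv : ∀ h, φ h * φ h⁻¹ = 1 := fun h => by rw [← map_mul, mul_inv_cancel, map_one]
  ext x
  constructor
  · rintro ⟨_, ⟨h, hh, rfl⟩, z, hz, rfl⟩
    refine ⟨φ h * z * φ h⁻¹, by simpa using hN h⁻¹ z hz, φ h, ⟨h, hh, rfl⟩, ?_⟩
    simp only [mul_assoc, hinv_mul, mul_one]
  · rintro ⟨z, hz, _, ⟨h, hh, rfl⟩, rfl⟩
    refine ⟨φ h, ⟨h, hh, rfl⟩, φ h⁻¹ * z * φ h, hN h z hz, ?_⟩
    simp only [← mul_assoc, hmul_inv, one_mul]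

theorem prod_ofFn_mul_image {L : ℕ} (N : Fin L → Set G) (T : Fin L → Set H)
    (hN : ∀ k h, ∀ z ∈ N k, φ h⁻¹ * z * φ h ∈ N k) :
    (List.ofFn fun k => N k * φ '' T k).prod = (List.ofFn N).prod * φ '' (List.ofFn T).prod := by
  induction L with
  | zero => simp [Set.image_one, Set.singleton_one]
  | succ L ih =>
    simp only [List.ofFn_succ', List.prod_concat, ih _ _ fun k => hN k.castSucc, Set.image_mul,
      mul_assoc]
    rw [← mul_assoc (φ '' _), image_mul_eq_mul_image φ (hN (Fin.last L)), mul_assoc]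

theorem mul_map_mem_prod_ofFn {L : ℕ} {N : Fin L → Set G} {T : Fin L → Set H}
    (hN : ∀ k h, ∀ z ∈ N k, φ h⁻¹ * z * φ h ∈ N k) {g : H}
    (hg : ∀ s ∈ (List.ofFn T).prod, s * g ∈ (List.ofFn T).prod) {x : G}
    (hx : x ∈ (List.ofFn fun k => N k * φ '' T k).prod) :
    x * φ g ∈ (List.ofFn fun k => N k * φ '' T k).prod := by
  rw [prod_ofFn_mul_image φ N T hN] at hx ⊢
  obtain ⟨z, hz, _, ⟨s, hs, rfl⟩, rfl⟩ := hx
  exact ⟨z, hz, φ (s * g), ⟨s * g, hg s hs, rfl⟩, by rw [map_mul, mul_assoc]⟩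

end NormalizedFactors

theorem Matrix.transvection_commutator {R n : Type*} [CommRing R] [Fintype n] [DecidableEq n]
    {i j k : n} (hij : i ≠ j) (hik : i ≠ k) (hkj : k ≠ j) (c : R) :
    transvection i k c * transvection k j 1 * transvection i k (-c) * transvection k j (-1) =
      transvection i j c := by
  simp only [transvection, mul_add, add_mul, mul_one, one_mul, single_mul_single_same,
    single_mul_single_of_ne, hik.symm, hkj.symm, hij.symm, ne_eq, not_false_eq_true, add_zero,
    mul_neg, neg_neg]
  simp only [← single_neg]
  abel

section

variable {R : Type*} [CommRing R] {m : ℕ}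

section Unitriangular

theorem IsLowerUnitriangular.transpose {M : Matrix (Fin m) (Fin m) R}
    (hM : IsLowerUnitriangular M) : IsUpperUnitriangular Mᵀ :=
  ⟨hM.1, fun i j hij => hM.2 j i hij⟩

theorem IsUpperUnitriangular.transpose {M : Matrix (Fin m) (Fin m) R}
    (hM : IsUpperUnitriangular M) : IsLowerUnitriangular Mᵀ :=
  ⟨hM.1, fun i j hij => hM.2 j i hij⟩

theorem IsLowerUnitriangular.mul {A B : Matrix (Fin m) (Fin m) R}
    (hA : IsLowerUnitriangular A) (hB : IsLowerUnitriangular B) :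
    IsLowerUnitriangular (A * B) := by
  refine ⟨fun i => ?_, fun i j hij => ?_⟩
  · rw [mul_apply, Finset.sum_eq_single i (fun k _ hk => ?_) (by simp), hA.1, hB.1, one_mul]
    rcases lt_or_gt_of_ne hk with h | h
    · rw [hB.2 k i h, mul_zero]
    · rw [hA.2 i k h, zero_mul]
  · exact BlockTriangular.mul (b := OrderDual.toDual) (fun i j h => hA.2 i j h)
      (fun i j h => hB.2 i j h) hij

theorem IsUpperUnitriangular.mul {A B : Matrix (Fin m) (Fin m) R}
    (hA : IsUpperUnitriangular A) (hB : IsUpperUnitriangular B) :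
    IsUpperUnitriangular (A * B) := by
  simpa using (hB.transpose.mul hA.transpose).transpose

theorem IsLowerUnitriangular.isUnit {M : Matrix (Fin m) (Fin m) R}
    (hM : IsLowerUnitriangular M) : IsUnit M := by
  rw [isUnit_iff_isUnit_det, det_of_isLowerTriangular M (fun i j h => hM.2 i j h)]
  simp [hM.1]

theorem IsUpperUnitriangular.isUnit {M : Matrix (Fin m) (Fin m) R}
    (hM : IsUpperUnitriangular M) : IsUnit M := by
  rw [isUnit_iff_isUnit_det, det_of_isUpperTriangular (fun i j h => hM.2 i j h)]
  simp [hM.1]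

theorem IsLowerUnitriangular.submatrix {M : Matrix (Fin (m + 1)) (Fin (m + 1)) R}
    (hM : IsLowerUnitriangular M) (p : Fin (m + 1)) :
    IsLowerUnitriangular (M.submatrix p.succAbove p.succAbove) :=
  ⟨fun _ => hM.1 _, fun _ _ hij => hM.2 _ _ (Fin.succAbove_lt_succAbove_iff.2 hij)⟩

theorem IsUpperUnitriangular.submatrix {M : Matrix (Fin (m + 1)) (Fin (m + 1)) R}
    (hM : IsUpperUnitriangular M) (p : Fin (m + 1)) :
    IsUpperUnitriangular (M.submatrix p.succAbove p.succAbove) :=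
  ⟨fun _ => hM.1 _, fun _ _ hij => hM.2 _ _ (Fin.succAbove_lt_succAbove_iff.2 hij)⟩

theorem IsLowerUnitriangular.row_zero {M : Matrix (Fin (m + 1)) (Fin (m + 1)) R}
    (hM : IsLowerUnitriangular M) : M 0 = Pi.single 0 1 := by
  ext j
  rcases Fin.eq_zero_or_eq_succ j with rfl | ⟨j, rfl⟩
  · simp [hM.1]
  · simp [hM.2 0 j.succ j.succ_pos]

theorem IsLowerUnitriangular.col_last {M : Matrix (Fin (m + 1)) (Fin (m + 1)) R}
    (hM : IsLowerUnitriangular M) : Mᵀ (Fin.last m) = Pi.single (Fin.last m) 1 := by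
  ext i
  rcases Fin.eq_castSucc_or_eq_last i with ⟨i, rfl⟩ | rfl
  · simp [hM.2 _ _ i.castSucc_lt_last, (Fin.castSucc_lt_last i).ne]
  · simp [hM.1]

theorem IsUpperUnitriangular.col_zero {M : Matrix (Fin (m + 1)) (Fin (m + 1)) R}
    (hM : IsUpperUnitriangular M) : Mᵀ 0 = Pi.single 0 1 :=
  hM.transpose.row_zero

theorem IsUpperUnitriangular.row_last {M : Matrix (Fin (m + 1)) (Fin (m + 1)) R}
    (hM : IsUpperUnitriangular M) : M (Fin.last m) = Pi.single (Fin.last m) 1 := by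
  simpa using hM.transpose.col_last

end Unitriangular

namespace Matrix

variable (p : Fin (m + 1))

/-- `M` on the rows and columns other than `p`, completed by the `p`-th row and column of the
identity. -/
def embedAt (M : Matrix (Fin m) (Fin m) R) : Matrix (Fin (m + 1)) (Fin (m + 1)) R :=
  of <| Fin.insertNth (α := fun _ => Fin (m + 1) → R) p (Pi.single p 1)
    fun i => Fin.insertNth p 0 (M i)

@[simp] theorem embedAt_self (M : Matrix (Fin m) (Fin m) R) : embedAt p M p = Pi.single p 1 := by
  ext; simp [embedAt]

@[simp] theorem embedAt_succAbove_self (M : Matrix (Fin m) (Fin m) R) (i : Fin m) :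
    embedAt p M (p.succAbove i) p = 0 := by
  simp [embedAt]

@[simp] theorem embedAt_succAbove_succAbove (M : Matrix (Fin m) (Fin m) R) (i j : Fin m) :
    embedAt p M (p.succAbove i) (p.succAbove j) = M i j := by
  simp [embedAt]

theorem transpose_embedAt (M : Matrix (Fin m) (Fin m) R) : (embedAt p M)ᵀ = embedAt p Mᵀ := by
  ext i j
  induction i using Fin.succAboveCases p <;> induction j using Fin.succAboveCases p <;> simp

theorem embedAt_one : embedAt p (1 : Matrix (Fin m) (Fin m) R) = 1 := by
  ext i j
  induction i using Fin.succAboveCases p <;> induction j using Fin.succAboveCases p <;>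
    simp [one_apply]

theorem embedAt_mul (A B : Matrix (Fin m) (Fin m) R) :
    embedAt p (A * B) = embedAt p A * embedAt p B := by
  ext i j
  rw [mul_apply, Fin.sum_univ_succAbove _ p]
  induction i using Fin.succAboveCases p <;> induction j using Fin.succAboveCases p <;>
    simp [mul_apply]

def embedAtHom : Matrix (Fin m) (Fin m) R →* Matrix (Fin (m + 1)) (Fin (m + 1)) R where
  toFun := embedAt p
  map_one' := embedAt_one p
  map_mul' := embedAt_mul p

def embedAtGL : GL (Fin m) R →* Matrix (Fin (m + 1)) (Fin (m + 1)) R :=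
  (embedAtHom p).comp (Units.coeHom _)

@[simp] theorem embedAtGL_apply (g : GL (Fin m) R) :
    embedAtGL p g = embedAt p (g : Matrix (Fin m) (Fin m) R) :=
  rfl

theorem embedAt_transvection (i j : Fin m) (c : R) :
    embedAt p (transvection i j c) = transvection (p.succAbove i) (p.succAbove j) c := by
  ext a b
  induction a using Fin.succAboveCases p <;> induction b using Fin.succAboveCases p <;>
    simp [transvection, one_apply, single_apply, Fin.succAbove_ne, (Fin.succAbove_ne _ _).symm]

theorem embedAt_mulVec_self (A : Matrix (Fin m) (Fin m) R) (x : Fin (m + 1) → R) :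
    (embedAt p A *ᵥ x) p = x p := by
  simp [mulVec]

/-- The identity with `x` added to its `p`-th column. -/
def colTransvection (x : Fin (m + 1) → R) : Matrix (Fin (m + 1)) (Fin (m + 1)) R :=
  1 + vecMulVec x (Pi.single p 1)

@[simp] theorem colTransvection_zero : colTransvection p (0 : Fin (m + 1) → R) = 1 := by
  simp [colTransvection]

theorem colTransvection_mul {y : Fin (m + 1) → R} (hy : y p = 0) (x : Fin (m + 1) → R) :
    colTransvection p x * colTransvection p y = colTransvection p (x + y) := by
  simp only [colTransvection, mul_add, add_mul, mul_one, one_mul, vecMulVec_mul_vecMulVec,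
    single_dotProduct, hy, zero_smul, vecMulVec_zero, add_zero, add_vecMulVec]
  abel

theorem colTransvection_single {i : Fin (m + 1)} (c : R) :
    colTransvection p (Pi.single i c) = transvection i p c := by
  ext a b
  simp only [colTransvection, transvection, add_apply, vecMulVec_apply, single_apply,
    Pi.single_apply, mul_ite, mul_one, mul_zero, ite_and, eq_comm]
  split_ifs <;> rfl

theorem embedAt_mul_colTransvection_mul_embedAt {A B : Matrix (Fin m) (Fin m) R}
    (hAB : A * B = 1) (x : Fin (m + 1) → R) :
    embedAt p A * colTransvection p x * embedAt p B =
      colTransvection p (embedAt p A *ᵥ x) := by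
  rw [colTransvection, colTransvection, mul_add, add_mul, mul_one, ← embedAt_mul, hAB,
    embedAt_one, mul_vecMulVec, vecMulVec_mul, single_one_vecMul, row, embedAt_self]

theorem eq_colTransvection_mul_embedAt {u : Matrix (Fin (m + 1)) (Fin (m + 1)) R}
    (hu : u p = Pi.single p 1) :
    u = colTransvection p (uᵀ p - Pi.single p 1) *
      embedAt p (u.submatrix p.succAbove p.succAbove) := by
  rw [colTransvection, add_mul, one_mul, vecMulVec_mul, single_one_vecMul, row, embedAt_self]
  ext i j
  have hpj := congrFun hu j
  induction i using Fin.succAboveCases p <;> induction j using Fin.succAboveCases p <;>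
    simp_all [vecMulVec_apply]

end Matrix

section Unitriangular

theorem IsLowerUnitriangular.embedAt {M : Matrix (Fin m) (Fin m) R}
    (hM : IsLowerUnitriangular M) (p : Fin (m + 1)) : IsLowerUnitriangular (embedAt p M) := by
  refine ⟨fun i => ?_, fun i j hij => ?_⟩
  · induction i using Fin.succAboveCases p <;> simp [hM.1]
  · induction i using Fin.succAboveCases p <;> induction j using Fin.succAboveCases p <;>
      simp_all [hM.2, Fin.succAbove_ne]

theorem IsUpperUnitriangular.embedAt {M : Matrix (Fin m) (Fin m) R}
    (hM : IsUpperUnitriangular M) (p : Fin (m + 1)) : IsUpperUnitriangular (embedAt p M) := by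
  simpa [transpose_embedAt] using (hM.transpose.embedAt p).transpose

theorem isLowerUnitriangular_colTransvection_zero {x : Fin (m + 1) → R} (hx : x 0 = 0) :
    IsLowerUnitriangular (colTransvection 0 x) := by
  refine ⟨fun i => ?_, fun i j hij => ?_⟩
  · rcases eq_or_ne i 0 with rfl | hi <;> simp [colTransvection, vecMulVec_apply, *]
  · simp [colTransvection, vecMulVec_apply, hij.ne, ((Fin.zero_le i).trans_lt hij).ne']

theorem isUpperUnitriangular_colTransvection_last {x : Fin (m + 1) → R}
    (hx : x (Fin.last m) = 0) : IsUpperUnitriangular (colTransvection (Fin.last m) x) := by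
  refine ⟨fun i => ?_, fun i j hij => ?_⟩
  · rcases eq_or_ne i (Fin.last m) with rfl | hi <;> simp [colTransvection, vecMulVec_apply, *]
  · simp [colTransvection, vecMulVec_apply, hij.ne', (hij.trans_le (Fin.le_last i)).ne]

end Unitriangular

section ElementaryGroup

theorem memElemGroup_one : MemElemGroup (1 : Matrix (Fin m) (Fin m) R) :=
  ⟨[], by simp, rfl⟩

theorem MemElemGroup.mul {A B : Matrix (Fin m) (Fin m) R} (hA : MemElemGroup A)
    (hB : MemElemGroup B) : MemElemGroup (A * B) := by
  obtain ⟨l₁, h₁, rfl⟩ := hA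
  obtain ⟨l₂, h₂, rfl⟩ := hB
  exact ⟨l₁ ++ l₂, fun A hA => (List.mem_append.1 hA).elim (h₁ A) (h₂ A), List.prod_append⟩

theorem memElemGroup_transvection {i j : Fin m} (hij : i ≠ j) (c : R) :
    MemElemGroup (transvection i j c) :=
  ⟨[transvection i j c], by simpa using ⟨i, j, c, hij, rfl⟩, by simp⟩

theorem IsElementary.isUnit {A : Matrix (Fin m) (Fin m) R} (hA : IsElementary A) : IsUnit A := by
  obtain ⟨i, j, c, hij, rfl⟩ := hA
  exact (isUnit_iff_isUnit_det _).2 ((det_transvection_of_ne i j hij c).symm ▸ isUnit_one)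

theorem MemElemGroup.isUnit {A : Matrix (Fin m) (Fin m) R} (hA : MemElemGroup A) : IsUnit A := by
  obtain ⟨l, hl, rfl⟩ := hA
  exact List.prod_isUnit fun A hA => (hl A hA).isUnit

theorem MemElemGroup.transpose {A : Matrix (Fin m) (Fin m) R} (hA : MemElemGroup A) :
    MemElemGroup Aᵀ := by
  obtain ⟨l, hl, rfl⟩ := hA
  refine ⟨(l.map Matrix.transpose).reverse, ?_, by simp [transpose_list_prod]⟩
  simp only [List.mem_reverse, List.mem_map]
  rintro _ ⟨A, hA, rfl⟩
  obtain ⟨i, j, c, hij, rfl⟩ := hl A hA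
  exact ⟨j, i, c, hij.symm, by simp⟩

theorem MemElemGroup.embedAt {A : Matrix (Fin m) (Fin m) R} (hA : MemElemGroup A)
    (p : Fin (m + 1)) : MemElemGroup (embedAt p A) := by
  obtain ⟨l, hl, rfl⟩ := hA
  refine ⟨l.map (Matrix.embedAt p), ?_, (map_list_prod (embedAtHom p) l).symm⟩
  simp only [List.mem_map]
  rintro _ ⟨A, hA, rfl⟩
  obtain ⟨i, j, c, hij, rfl⟩ := hl A hA
  exact ⟨_, _, c, p.succAbove_right_injective.ne hij, embedAt_transvection p i j c⟩

theorem memElemGroup_colTransvection (p : Fin (m + 1)) {x : Fin (m + 1) → R} (hx : x p = 0) :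
    MemElemGroup (colTransvection p x) := by
  suffices x p = 0 ∧ MemElemGroup (colTransvection p x) from this.2
  rw [← Finset.univ_sum_single x]
  refine Finset.sum_induction _
    (fun y : Fin (m + 1) → R => y p = 0 ∧ MemElemGroup (colTransvection p y))
    (fun y z hy hz => ?_) ⟨rfl, by simpa using memElemGroup_one⟩ fun i _ => ?_
  · rw [← colTransvection_mul p hz.1]
    exact ⟨by simp [hy.1, hz.1], hy.2.mul hz.2⟩
  · rcases eq_or_ne i p with rfl | hi
    · simpa [hx] using memElemGroup_one
    · rw [colTransvection_single]
      exact ⟨by simp [hi.symm], memElemGroup_transvection hi _⟩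

theorem IsLowerUnitriangular.memElemGroup {M : Matrix (Fin m) (Fin m) R}
    (hM : IsLowerUnitriangular M) : MemElemGroup M := by
  induction m with
  | zero => exact Subsingleton.elim 1 M ▸ memElemGroup_one
  | succ m ih =>
    rw [eq_colTransvection_mul_embedAt 0 hM.row_zero]
    exact (memElemGroup_colTransvection 0 (by simp [hM.1])).mul
      ((ih (hM.submatrix 0)).embedAt 0)

theorem IsUpperUnitriangular.memElemGroup {M : Matrix (Fin m) (Fin m) R}
    (hM : IsUpperUnitriangular M) : MemElemGroup M := by
  simpa using hM.transpose.memElemGroup.transpose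

end ElementaryGroup

namespace Matrix

variable (p : Fin (m + 1))

def colTransvections : Set (Matrix (Fin (m + 1)) (Fin (m + 1)) R) :=
  {M | ∃ x, x p = 0 ∧ colTransvection p x = M}

def rowTransvections : Set (Matrix (Fin (m + 1)) (Fin (m + 1)) R) :=
  transpose ⁻¹' colTransvections p

theorem embedAtGL_conj_mem_colTransvections (g : GL (Fin m) R)
    {z : Matrix (Fin (m + 1)) (Fin (m + 1)) R} (hz : z ∈ colTransvections p) :
    embedAtGL p g⁻¹ * z * embedAtGL p g ∈ colTransvections p := by
  obtain ⟨x, hx, rfl⟩ := hz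
  exact ⟨_, by rw [embedAt_mulVec_self, hx],
    (embedAt_mul_colTransvection_mul_embedAt p g.inv_mul x).symm⟩

theorem embedAtGL_conj_mem_rowTransvections (g : GL (Fin m) R)
    {z : Matrix (Fin (m + 1)) (Fin (m + 1)) R} (hz : z ∈ rowTransvections p) :
    embedAtGL p g⁻¹ * z * embedAtGL p g ∈ rowTransvections p := by
  obtain ⟨x, hx, hzx⟩ := hz
  have hg : (g : Matrix (Fin m) (Fin m) R)ᵀ * (↑g⁻¹ : Matrix (Fin m) (Fin m) R)ᵀ = 1 := by
    rw [← transpose_mul, Units.inv_mul, transpose_one]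
  refine ⟨embedAt p (g : Matrix (Fin m) (Fin m) R)ᵀ *ᵥ x, by rw [embedAt_mulVec_self, hx], ?_⟩
  rw [← embedAt_mul_colTransvection_mul_embedAt p hg, hzx]
  simp [transpose_mul, transpose_embedAt, mul_assoc]

theorem eq_colTransvections_mul_image {T : Set (Matrix (Fin (m + 1)) (Fin (m + 1)) R)}
    {T' : Set (Matrix (Fin m) (Fin m) R)}
    (hT : ∀ u ∈ T, u p = Pi.single p 1 ∧ u.submatrix p.succAbove p.succAbove ∈ T')
    (hT' : ∀ w ∈ T', IsUnit w)
    (hmul : ∀ z ∈ colTransvections p, ∀ w ∈ T', z * embedAt p w ∈ T) :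
    T = colTransvections p * embedAtGL p '' (Units.val ⁻¹' T') := by
  ext u
  refine ⟨fun hu => ?_, ?_⟩
  · obtain ⟨hp, hs⟩ := hT u hu
    rw [eq_colTransvection_mul_embedAt p hp]
    exact Set.mul_mem_mul ⟨_, by simp [hp], rfl⟩ ⟨(hT' _ hs).unit, hs, by simp⟩
  · rintro ⟨z, hz, _, ⟨w, hw, rfl⟩, rfl⟩
    exact hmul z hz w hw

theorem eq_rowTransvections_mul_image {T : Set (Matrix (Fin (m + 1)) (Fin (m + 1)) R)}
    {T' : Set (Matrix (Fin m) (Fin m) R)}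
    (hT : ∀ u ∈ T, uᵀ p = Pi.single p 1 ∧ u.submatrix p.succAbove p.succAbove ∈ T')
    (hT' : ∀ w ∈ T', IsUnit w)
    (hmul : ∀ w ∈ T', ∀ z ∈ rowTransvections p, embedAt p w * z ∈ T) :
    T = rowTransvections p * embedAtGL p '' (Units.val ⁻¹' T') := by
  rw [← image_mul_eq_mul_image _ fun g _ => embedAtGL_conj_mem_rowTransvections p g]
  ext u
  refine ⟨fun hu => ?_, ?_⟩
  · obtain ⟨hp, hs⟩ := hT u hu
    have hu' : u = embedAt p (u.submatrix p.succAbove p.succAbove) *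
        (colTransvection p (u p - Pi.single p 1))ᵀ := by
      simpa [transpose_mul, transpose_embedAt] using
        congrArg transpose (eq_colTransvection_mul_embedAt p hp)
    rw [hu']
    exact Set.mul_mem_mul ⟨(hT' _ hs).unit, hs, by simp⟩
      ⟨u p - Pi.single p 1, by simpa [sub_eq_zero] using congrFun hp p, by simp⟩
  · rintro ⟨_, ⟨w, hw, rfl⟩, z, hz, rfl⟩
    exact hmul w hw z hz

end Matrix

section Parabolic

theorem setOf_isLowerUnitriangular_eq_colTransvections_zero_mul :
    {M : Matrix (Fin (m + 1)) (Fin (m + 1)) R | IsLowerUnitriangular M} =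
      colTransvections 0 * embedAtGL 0 '' (Units.val ⁻¹' {M | IsLowerUnitriangular M}) :=
  eq_colTransvections_mul_image 0 (fun _ hu => ⟨hu.row_zero, hu.submatrix 0⟩)
    (fun _ hw => hw.isUnit) fun _ ⟨_, hx, hz⟩ _ hw =>
      hz ▸ (isLowerUnitriangular_colTransvection_zero hx).mul (hw.embedAt 0)

theorem setOf_isUpperUnitriangular_eq_rowTransvections_zero_mul :
    {M : Matrix (Fin (m + 1)) (Fin (m + 1)) R | IsUpperUnitriangular M} =
      rowTransvections 0 * embedAtGL 0 '' (Units.val ⁻¹' {M | IsUpperUnitriangular M}) :=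
  eq_rowTransvections_mul_image 0 (fun _ hu => ⟨hu.col_zero, hu.submatrix 0⟩)
    (fun _ hw => hw.isUnit) fun _ hw _ ⟨_, hx, hz⟩ =>
      (hw.embedAt 0).mul
        (by simpa [hz] using (isLowerUnitriangular_colTransvection_zero hx).transpose)

theorem setOf_isLowerUnitriangular_eq_rowTransvections_last_mul :
    {M : Matrix (Fin (m + 1)) (Fin (m + 1)) R | IsLowerUnitriangular M} =
      rowTransvections (Fin.last m) *
        embedAtGL (Fin.last m) '' (Units.val ⁻¹' {M | IsLowerUnitriangular M}) :=
  eq_rowTransvections_mul_image _ (fun _ hu => ⟨hu.col_last, hu.submatrix _⟩)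
    (fun _ hw => hw.isUnit) fun _ hw _ ⟨_, hx, hz⟩ =>
      (hw.embedAt _).mul
        (by simpa [hz] using (isUpperUnitriangular_colTransvection_last hx).transpose)

theorem setOf_isUpperUnitriangular_eq_colTransvections_last_mul :
    {M : Matrix (Fin (m + 1)) (Fin (m + 1)) R | IsUpperUnitriangular M} =
      colTransvections (Fin.last m) *
        embedAtGL (Fin.last m) '' (Units.val ⁻¹' {M | IsUpperUnitriangular M}) :=
  eq_colTransvections_mul_image _ (fun _ hu => ⟨hu.row_last, hu.submatrix _⟩)
    (fun _ hw => hw.isUnit) fun _ ⟨_, hx, hz⟩ _ hw =>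
      hz ▸ (isUpperUnitriangular_colTransvection_last hx).mul (hw.embedAt _)

end Parabolic

section Factorization

variable {L : ℕ}

def altUnitriangular (k : ℕ) : Set (Matrix (Fin m) (Fin m) R) :=
  {M | if k % 2 = 0 then IsLowerUnitriangular M else IsUpperUnitriangular M}

theorem isUnit_of_mem_altUnitriangular {k : ℕ} {M : Matrix (Fin m) (Fin m) R}
    (hM : M ∈ altUnitriangular k) : IsUnit M := by
  unfold altUnitriangular at hM
  split_ifs at hM
  exacts [hM.isUnit, hM.isUnit]

theorem memElemGroup_of_mem_altUnitriangular {k : ℕ} {M : Matrix (Fin m) (Fin m) R}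
    (hM : M ∈ altUnitriangular k) : MemElemGroup M := by
  unfold altUnitriangular at hM
  split_ifs at hM
  exacts [hM.memElemGroup, hM.memElemGroup]

theorem hasAltUnitriangularFactorization_iff_mem_prod {M : Matrix (Fin m) (Fin m) R} :
    HasAltUnitriangularFactorization L M ↔
      M ∈ (List.ofFn fun k : Fin L => altUnitriangular (R := R) k.1).prod := by
  rw [Set.mem_prod_list_ofFn]
  exact ⟨fun ⟨f, hf, hM⟩ => ⟨fun k => ⟨f k, hf k⟩, hM⟩, fun ⟨f, hM⟩ => ⟨_, fun k => (f k).2, hM⟩⟩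

theorem HasAltUnitriangularFactorization.memElemGroup {M : Matrix (Fin m) (Fin m) R}
    (hM : HasAltUnitriangularFactorization L M) : MemElemGroup M := by
  obtain ⟨f, hf, rfl⟩ := hM
  refine List.prod_induction _ (fun _ _ => MemElemGroup.mul) memElemGroup_one ?_
  simpa [List.mem_ofFn] using fun k => memElemGroup_of_mem_altUnitriangular (hf k)

theorem hasAltUnitriangularFactorization_val_iff_mem_prod {u : GL (Fin m) R} :
    HasAltUnitriangularFactorization L (u : Matrix (Fin m) (Fin m) R) ↔
      u ∈ (List.ofFn fun k : Fin L => Units.val ⁻¹' altUnitriangular (R := R) k.1).prod := by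
  rw [hasAltUnitriangularFactorization_iff_mem_prod, Set.mem_prod_list_ofFn,
    Set.mem_prod_list_ofFn]
  have hval : ∀ f : Fin L → GL (Fin m) R,
      ((List.ofFn f).prod : Matrix (Fin m) (Fin m) R) =
        (List.ofFn fun k => (f k : Matrix (Fin m) (Fin m) R)).prod :=
    fun f => by rw [← Units.coeHom_apply, map_list_prod, List.map_ofFn]; rfl
  refine ⟨fun ⟨f, hf⟩ => ?_, fun ⟨f, hf⟩ => ⟨fun k => ⟨(f k : GL (Fin m) R), (f k).2⟩, ?_⟩⟩
  · refine ⟨fun k => ⟨(isUnit_of_mem_altUnitriangular (f k).2).unit, by simp [(f k).2]⟩,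
      Units.ext ?_⟩
    rw [hval, ← hf]
    simp
  · rw [← hf, hval]

theorem HasAltUnitriangularFactorization.mul_embedAt {p : Fin (m + 1)}
    {Nl Nu : Set (Matrix (Fin (m + 1)) (Fin (m + 1)) R)}
    (hNl : ∀ g : GL (Fin m) R, ∀ z ∈ Nl, embedAtGL p g⁻¹ * z * embedAtGL p g ∈ Nl)
    (hNu : ∀ g : GL (Fin m) R, ∀ z ∈ Nu, embedAtGL p g⁻¹ * z * embedAtGL p g ∈ Nu)
    (hl : {M | IsLowerUnitriangular M} =
      Nl * embedAtGL p '' (Units.val ⁻¹' {M | IsLowerUnitriangular M}))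
    (hu : {M | IsUpperUnitriangular M} =
      Nu * embedAtGL p '' (Units.val ⁻¹' {M | IsUpperUnitriangular M}))
    (h : ∀ M : Matrix (Fin m) (Fin m) R, MemElemGroup M → HasAltUnitriangularFactorization L M)
    {M : Matrix (Fin (m + 1)) (Fin (m + 1)) R} (hM : HasAltUnitriangularFactorization L M)
    {g : Matrix (Fin m) (Fin m) R} (hg : MemElemGroup g) :
    HasAltUnitriangularFactorization L (M * embedAt p g) := by
  set N : Fin L → Set (Matrix (Fin (m + 1)) (Fin (m + 1)) R) :=
    fun k => if k.1 % 2 = 0 then Nl else Nu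
  have hN : ∀ k g, ∀ z ∈ N k, embedAtGL p g⁻¹ * z * embedAtGL p g ∈ N k := fun k => by
    simp only [N]; split_ifs; exacts [hNl, hNu]
  have hT : (List.ofFn fun k : Fin L => altUnitriangular (R := R) (m := m + 1) k.1) =
      List.ofFn fun k => N k * embedAtGL p '' (Units.val ⁻¹' altUnitriangular k.1) := by
    congr 1; funext k
    by_cases hk : k.1 % 2 = 0 <;> simp only [altUnitriangular, N, hk, if_true, if_false] <;>
      assumption
  rw [hasAltUnitriangularFactorization_iff_mem_prod, hT] at hM ⊢
  have hsmall : ∀ s ∈ (List.ofFn fun k : Fin L => Units.val ⁻¹' altUnitriangular (R := R) k.1).prod,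
      s * hg.isUnit.unit ∈
        (List.ofFn fun k : Fin L => Units.val ⁻¹' altUnitriangular k.1).prod := by
    intro s hs
    rw [← hasAltUnitriangularFactorization_val_iff_mem_prod] at hs ⊢
    exact h _ (by simpa using hs.memElemGroup.mul hg)
  simpa using mul_map_mem_prod_ofFn (G := Matrix (Fin (m + 1)) (Fin (m + 1)) R) (embedAtGL p) hN
    hsmall hM

theorem HasAltUnitriangularFactorization.mul_embedAt_of_eq_zero_or_last
    (h : ∀ M : Matrix (Fin m) (Fin m) R, MemElemGroup M → HasAltUnitriangularFactorization L M)
    {M : Matrix (Fin (m + 1)) (Fin (m + 1)) R} (hM : HasAltUnitriangularFactorization L M)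
    {p : Fin (m + 1)} (hp : p = 0 ∨ p = Fin.last m) {g : Matrix (Fin m) (Fin m) R}
    (hg : MemElemGroup g) : HasAltUnitriangularFactorization L (M * embedAt p g) := by
  rcases hp with rfl | rfl
  · exact hM.mul_embedAt (fun g _ => embedAtGL_conj_mem_colTransvections 0 g)
      (fun g _ => embedAtGL_conj_mem_rowTransvections 0 g)
      setOf_isLowerUnitriangular_eq_colTransvections_zero_mul
      setOf_isUpperUnitriangular_eq_rowTransvections_zero_mul h hg
  · exact hM.mul_embedAt (fun g _ => embedAtGL_conj_mem_rowTransvections _ g)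
      (fun g _ => embedAtGL_conj_mem_colTransvections _ g)
      setOf_isLowerUnitriangular_eq_rowTransvections_last_mul
      setOf_isUpperUnitriangular_eq_colTransvections_last_mul h hg

theorem HasAltUnitriangularFactorization.mul_transvection_of_ne
    (h : ∀ M : Matrix (Fin m) (Fin m) R, MemElemGroup M → HasAltUnitriangularFactorization L M)
    {M : Matrix (Fin (m + 1)) (Fin (m + 1)) R} (hM : HasAltUnitriangularFactorization L M)
    {p : Fin (m + 1)} (hp : p = 0 ∨ p = Fin.last m) {i j : Fin (m + 1)} (hij : i ≠ j)
    (hi : i ≠ p) (hj : j ≠ p) (c : R) :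
    HasAltUnitriangularFactorization L (M * transvection i j c) := by
  obtain ⟨i, rfl⟩ := Fin.exists_succAbove_eq hi
  obtain ⟨j, rfl⟩ := Fin.exists_succAbove_eq hj
  rw [← embedAt_transvection]
  exact hM.mul_embedAt_of_eq_zero_or_last h hp
    (memElemGroup_transvection (p.succAbove_right_injective.ne_iff.1 hij) c)

theorem HasAltUnitriangularFactorization.mul_transvection (hm : 2 ≤ m)
    (h : ∀ M : Matrix (Fin m) (Fin m) R, MemElemGroup M → HasAltUnitriangularFactorization L M)
    {M : Matrix (Fin (m + 1)) (Fin (m + 1)) R} (hM : HasAltUnitriangularFactorization L M)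
    {i j : Fin (m + 1)} (hij : i ≠ j) (c : R) :
    HasAltUnitriangularFactorization L (M * transvection i j c) := by
  by_cases hfree : ∃ p, (p = 0 ∨ p = Fin.last m) ∧ i ≠ p ∧ j ≠ p
  · obtain ⟨p, hp, hi, hj⟩ := hfree
    exact hM.mul_transvection_of_ne h hp hij hi hj c
  push Not at hfree
  have h0l : (0 : Fin (m + 1)) ≠ Fin.last m := by simp [Fin.ext_iff]; omega
  have hi : i = 0 ∨ i = Fin.last m := by
    by_contra hne
    push Not at hne
    exact h0l ((hfree 0 (Or.inl rfl) hne.1).symm.trans (hfree _ (Or.inr rfl) hne.2))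
  have hj : j = 0 ∨ j = Fin.last m := by
    rcases hi with rfl | rfl
    exacts [Or.inr (hfree _ (Or.inr rfl) h0l), Or.inl (hfree 0 (Or.inl rfl) h0l.symm)]
  -- `{i, j} = {0, m}`: write `e_ij(c)` as the commutator of `e_ik(c)` and `e_kj(1)` with `k = 1`;
  -- the first avoids `j` and the second avoids `i`.
  set k : Fin (m + 1) := ⟨1, by omega⟩
  have hk0 : k ≠ 0 := by simp [k, Fin.ext_iff]
  have hkl : k ≠ Fin.last m := by simp [k, Fin.ext_iff]; omega
  have hik : i ≠ k := by rcases hi with rfl | rfl <;> [exact hk0.symm; exact hkl.symm]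
  have hkj : k ≠ j := by rcases hj with rfl | rfl <;> [exact hk0; exact hkl]
  rw [← transvection_commutator hij hik hkj c]
  simp only [← mul_assoc]
  exact (((hM.mul_transvection_of_ne h hj hik hij hkj c).mul_transvection_of_ne h hi hkj
    hik.symm hij.symm 1).mul_transvection_of_ne h hj hik hij hkj (-c)).mul_transvection_of_ne
    h hi hkj hik.symm hij.symm (-1)

theorem hasAltUnitriangularFactorization_one (L : ℕ) :
    HasAltUnitriangularFactorization L (1 : Matrix (Fin m) (Fin m) R) := by
  refine ⟨fun _ => 1, fun k => ?_, by simp⟩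
  have hl : IsLowerUnitriangular (1 : Matrix (Fin m) (Fin m) R) :=
    ⟨fun _ => one_apply_eq _, fun _ _ h => one_apply_ne h.ne⟩
  split_ifs
  exacts [hl, by simpa using hl.transpose]

theorem HasAltUnitriangularFactorization.mul_memElemGroup (hm : 2 ≤ m)
    (h : ∀ M : Matrix (Fin m) (Fin m) R, MemElemGroup M → HasAltUnitriangularFactorization L M)
    {M : Matrix (Fin (m + 1)) (Fin (m + 1)) R} (hM : HasAltUnitriangularFactorization L M)
    {g : Matrix (Fin (m + 1)) (Fin (m + 1)) R} (hg : MemElemGroup g) :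
    HasAltUnitriangularFactorization L (M * g) := by
  obtain ⟨l, hl, rfl⟩ := hg
  induction l generalizing M with
  | nil => simpa using hM
  | cons e l ih =>
    obtain ⟨i, j, c, hij, rfl⟩ := hl e List.mem_cons_self
    rw [List.prod_cons, ← mul_assoc]
    exact ih (hM.mul_transvection hm h hij c) fun A hA => hl A (List.mem_cons_of_mem _ hA)

end Factorization

end

/-- Tavgen reduction for the root system `A_{n-1}`: if every matrix in `E_{n-1}(R)` is a
product of `L` alternately lower/upper unitriangular matrices (starting lower), then so is
every matrix in `E_n(R)`. -/
theorem stmt1 {R : Type*} [CommRing R] (n : ℕ) (hn : 3 ≤ n) (L : ℕ)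
    (h : ∀ M : Matrix (Fin (n - 1)) (Fin (n - 1)) R, MemElemGroup M →
      HasAltUnitriangularFactorization L M) :
    ∀ M : Matrix (Fin n) (Fin n) R, MemElemGroup M →
      HasAltUnitriangularFactorization L M := by
  obtain ⟨m, rfl⟩ : ∃ m, n = m + 1 := ⟨n - 1, by omega⟩
  intro M hM
  simpa using (hasAltUnitriangularFactorization_one L).mul_memElemGroup (by omega) h hM
end

section
/- There is no holomorphic mapping S : ℂ → M₂(ℂ) such that S(z)·S(z) = [[exp(z), 1], [0, 1]] for all z ∈ ℂ; in other words, the holomorphic matrix T(z) = [[e^z, 1], [0, 1]] has no holomorphic square root. -/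
/-- Any square root of `!![1,1;0,1]` has determinant `1`. -/
lemma aux_det_one (S : Matrix (Fin 2) (Fin 2) ℂ)
    (h : S * S = !![1, 1; 0, 1]) : S.det = 1 := by
  have e00 := congrFun (congrFun h 0) 0
  have e01 := congrFun (congrFun h 0) 1
  have e10 := congrFun (congrFun h 1) 0
  have e11 := congrFun (congrFun h 1) 1
  simp [Matrix.mul_apply, Fin.sum_univ_two] at e00 e01 e10 e11
  set a := S 0 0; set b := S 0 1; set c := S 1 0; set d := S 1 1
  have hsum : b * (a + d) = 1 := by linear_combination e01
  have hne : a + d ≠ 0 := by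
    intro h0; rw [h0, mul_zero] at hsum; exact one_ne_zero hsum.symm
  have hc : c = 0 := by
    rcases mul_eq_zero.mp (show c * (a + d) = 0 by linear_combination e10) with h' | h'
    · exact h'
    · exact absurd h' hne
  have had : a = d := by
    have h2 : (a - d) * (a + d) = 0 := by linear_combination e00 - e11
    rcases mul_eq_zero.mp h2 with h' | h'
    · exact sub_eq_zero.mp h'
    · exact absurd h' hne
  rw [Matrix.det_fin_two]
  linear_combination e00 - a * had - 2 * b * hc

/-- The holomorphic matrix `T(z) = [[e^z, 1], [0, 1]]` has no holomorphic square root. -/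
theorem stmt5 :
    ¬ ∃ S : ℂ → Matrix (Fin 2) (Fin 2) ℂ,
      (∀ i j : Fin 2, Differentiable ℂ fun z => S z i j) ∧
      (∀ z : ℂ, S z * S z = !![Complex.exp z, 1; 0, 1]) := by
  rintro ⟨S, hdiff, hsq⟩
  -- f = det ∘ S is continuous and f² = exp
  set f : ℂ → ℂ := fun z => (S z).det with hf
  have hfc : Continuous f := by
    have : f = fun z => S z 0 0 * S z 1 1 - S z 0 1 * S z 1 0 := by
      funext z; simp [hf, Matrix.det_fin_two]
    rw [this]
    exact (((hdiff 0 0).continuous.mul (hdiff 1 1).continuous).sub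
      ((hdiff 0 1).continuous.mul (hdiff 1 0).continuous))
  have hf2 : ∀ z, f z ^ 2 = Complex.exp z := by
    intro z
    have : f z ^ 2 = (S z * S z).det := by
      simp [hf, Matrix.det_mul, sq]
    rw [this, hsq z, Matrix.det_fin_two_of]
    ring
  -- g = f(z) * exp(-z/2) is continuous with g² = 1
  set g : ℂ → ℂ := fun z => f z * Complex.exp (-(z / 2)) with hg
  have hgc : Continuous g := hfc.mul (Complex.continuous_exp.comp (by fun_prop))
  have hg2 : ∀ z, g z ^ 2 = 1 := by
    intro z
    have : Complex.exp (-(z / 2)) ^ 2 = Complex.exp (-z) := by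
      rw [sq, ← Complex.exp_add]; ring_nf
    simp only [hg, mul_pow, hf2, this, ← Complex.exp_add]
    simp
  -- the set where g = 1 is clopen
  have hdichot : ∀ z, g z = 1 ∨ g z = -1 := by
    intro z
    have : (g z - 1) * (g z + 1) = 0 := by linear_combination hg2 z
    rcases mul_eq_zero.mp this with h | h
    · exact Or.inl (by linear_combination h)
    · exact Or.inr (by linear_combination h)
  have hcl1 : IsClosed {z : ℂ | g z = 1} := isClosed_eq hgc continuous_const
  have hcl2 : IsClosed {z : ℂ | g z = -1} := isClosed_eq hgc continuous_const
  have hcompl : {z : ℂ | g z = 1} = {z : ℂ | g z = -1}ᶜ := by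
    ext z
    simp only [Set.mem_setOf_eq, Set.mem_compl_iff]
    constructor
    · intro h1 h2; rw [h1] at h2; norm_num at h2
    · intro h2; rcases hdichot z with h | h
      · exact h
      · exact absurd h h2
  have hclopen : IsClopen {z : ℂ | g z = 1} :=
    ⟨hcl1, by rw [hcompl]; exact hcl2.isOpen_compl⟩
  -- g 0 = 1
  have hg0 : g 0 = 1 := by
    have hf0 : f 0 = 1 := by
      apply aux_det_one
      have := hsq 0
      rwa [Complex.exp_zero] at this
    simp [hg, hf0]
  -- g (2πi) = -1
  have hg2pi : g (2 * Real.pi * Complex.I) = -1 := by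
    have hfp : f (2 * Real.pi * Complex.I) = 1 := by
      apply aux_det_one
      have := hsq (2 * Real.pi * Complex.I)
      rwa [Complex.exp_two_pi_mul_I] at this
    simp only [hg, hfp, one_mul]
    rw [show -((2 * (Real.pi : ℂ) * Complex.I) / 2) = -((Real.pi : ℂ) * Complex.I) by ring,
      Complex.exp_neg, Complex.exp_pi_mul_I]
    norm_num
  -- contradiction via connectedness
  rcases isClopen_iff.mp hclopen with he | hu
  · have : (0 : ℂ) ∈ {z : ℂ | g z = 1} := hg0
    rw [he] at this; exact this
  · have : (2 * Real.pi * Complex.I : ℂ) ∈ {z : ℂ | g z = 1} := hu ▸ Set.mem_univ _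
    rw [Set.mem_setOf_eq, hg2pi] at this
    norm_num at this
end

section
/- There is no holomorphic mapping A : ℂ → M₂(ℂ) such that exp(A(z)) = [[exp(z), 1], [0, 1]] for all z ∈ ℂ; in other words, the holomorphic matrix T(z) = [[e^z, 1], [0, 1]] has no holomorphic logarithm. -/
/-!
Suppose `exp (A z) = T z`. Then `B z = exp (A z / 2)` is a continuous square root of `T z`.
Comparing entries of `B z * B z = T z`, the `(0,1)` entry gives `B₀₁ · tr B = 1`, so `B` is upper
triangular with `B₀₀² = e^z`, `B₁₁² = 1` and nonvanishing trace. A continuous square root of a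
nowhere-zero function is determined up to a sign, and `ℂ` is connected, so `B₀₀ = u e^{z/2}` and
`B₁₁ = v` with constants `u, v = ±1`. But `u e^{z/2} + v` vanishes somewhere.
-/

open NormedSpace

namespace Matrix

theorem continuous_exp {m 𝕂 : Type*} [Fintype m] [DecidableEq m] [RCLike 𝕂] :
    Continuous (exp : Matrix m m 𝕂 → Matrix m m 𝕂) := by
  open scoped Matrix.Norms.Operator in exact exp_continuous

theorem exp_inv_two_smul_sq {m 𝔸 : Type*} [Fintype m] [DecidableEq m] [NormedRing 𝔸]
    [NormedAlgebra ℚ 𝔸] [CompleteSpace 𝔸] (A : Matrix m m 𝔸) :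
    exp ((2 : ℚ)⁻¹ • A) ^ 2 = exp A := by
  rw [← exp_nsmul, ← Nat.cast_smul_eq_nsmul ℚ, smul_smul]
  norm_num

theorem fin_two_entries_of_mul_self_eq {R : Type*} [CommRing R]
    {B : Matrix (Fin 2) (Fin 2) R} {a d : R} (h : B * B = !![a, 1; 0, d]) :
    B 1 0 = 0 ∧ B 0 0 * B 0 0 = a ∧ B 1 1 * B 1 1 = d ∧ IsUnit B.trace := by
  rw [B.eta_fin_two, mul_fin_two] at h
  have h00 := congrFun₂ h 0 0
  have h01 := congrFun₂ h 0 1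
  have h10 := congrFun₂ h 1 0
  have h11 := congrFun₂ h 1 1
  simp only [Fin.isValue, of_apply, cons_val', cons_val_zero, cons_val_fin_one, cons_val_one]
    at h00 h01 h10 h11
  have htr : B.trace * B 0 1 = 1 := by
    rw [trace_fin_two]
    linear_combination h01
  have h10_eq : B 1 0 = 0 := by
    rw [trace_fin_two] at htr
    linear_combination B 0 1 * h10 - B 1 0 * htr
  exact ⟨h10_eq, by linear_combination h00 - B 0 1 * h10_eq,
    by linear_combination h11 - B 0 1 * h10_eq, IsUnit.of_mul_eq_one _ htr⟩

end Matrix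

theorem PreconnectedSpace.eq_of_mul_self_eq_one {X R : Type*} [TopologicalSpace X]
    [PreconnectedSpace X] [Ring R] [NoZeroDivisors R] [TopologicalSpace R] [T1Space R]
    {f : X → R} (hf : Continuous f) (h : ∀ x, f x * f x = 1) (x y : X) : f x = f y :=
  isPreconnected_univ.constant_of_mapsTo (Set.toFinite {1, -1}).isDiscrete hf.continuousOn
    (fun x _ => mul_self_eq_one_iff.mp (h x)) trivial trivial

namespace Complex

theorem exists_eq_mul_exp_half_of_mul_self_eq_exp {f : ℂ → ℂ} (hf : Continuous f)
    (h : ∀ z, f z * f z = exp z) : ∃ u : ℂ, u * u = 1 ∧ ∀ z, f z = u * exp (z / 2) := by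
  set g := fun z => f z * exp (-(z / 2))
  have hg : ∀ z, g z * g z = 1 := fun z => by
    rw [mul_mul_mul_comm, h, ← exp_add, ← exp_add]
    ring_nf
    exact exp_zero
  have hg_cont : Continuous g := by fun_prop
  refine ⟨g 0, hg 0, fun z => ?_⟩
  rw [← PreconnectedSpace.eq_of_mul_self_eq_one hg_cont hg z, mul_assoc, ← exp_add]
  ring_nf
  rw [exp_zero, mul_one]

theorem exists_mul_exp_half_add_eq_zero {u v : ℂ} (hu : u ≠ 0) (hv : v ≠ 0) :
    ∃ z, u * exp (z / 2) + v = 0 :=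
  ⟨2 * log (-v / u), by
    rw [mul_div_cancel_left₀ _ two_ne_zero, exp_log (div_ne_zero (neg_ne_zero.mpr hv) hu)]
    field_simp
    ring⟩

end Complex

/-- The holomorphic matrix `T(z) = [[e^z, 1], [0, 1]]` has no holomorphic logarithm. -/
theorem stmt6 :
    ¬ ∃ A : ℂ → Matrix (Fin 2) (Fin 2) ℂ,
      (∀ i j : Fin 2, Differentiable ℂ fun z => A z i j) ∧
      (∀ z : ℂ, NormedSpace.exp (A z) = !![Complex.exp z, 1; 0, 1]) := by
  rintro ⟨A, hA, hexp⟩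
  set B := fun z => exp ((2 : ℚ)⁻¹ • A z)
  have hB : Continuous B := Matrix.continuous_exp.comp
    ((continuous_matrix fun i j => (hA i j).continuous).const_smul (2 : ℚ)⁻¹)
  have hBB z : B z * B z = !![Complex.exp z, 1; 0, 1] := by
    rw [← hexp, ← sq, Matrix.exp_inv_two_smul_sq]
  choose _ h00 h11 htr using fun z => Matrix.fin_two_entries_of_mul_self_eq (hBB z)
  obtain ⟨u, hu, hB00⟩ :=
    Complex.exists_eq_mul_exp_half_of_mul_self_eq_exp (hB.matrix_elem 0 0) h00
  have hB11 z : B z 1 1 = B 0 1 1 :=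
    PreconnectedSpace.eq_of_mul_self_eq_one (hB.matrix_elem 1 1) h11 z 0
  obtain ⟨z, hz⟩ := Complex.exists_mul_exp_half_add_eq_zero (left_ne_zero_of_mul_eq_one hu)
    (left_ne_zero_of_mul_eq_one (h11 0))
  apply (htr z).ne_zero
  rw [Matrix.trace_fin_two, hB00, hB11, hz]
end

section
/- Let R be a commutative ring and let a, b, c, d ∈ R with a·d − b·c = 1 and a invertible. For g₁, g₂, g₃, g₄ ∈ R, the identity L(g₁)·U(g₂)·L(g₃)·U(g₄) = [[a, b], [c, d]] holds if and only if 1 + g₂·g₃ = a, g₄ = a⁻¹·(b − g₂), and g₁ = a⁻¹·(c − g₃). -/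
/-- Analysis of the 4-factor unitriangular factorization of `[[a, b], [c, d]]` over a
commutative ring when `a` is invertible. Here `L g = [[1, 0], [g, 1]]`,
`U g = [[1, g], [0, 1]]`, and `a⁻¹ = Ring.inverse a`. -/
theorem stmt13 {R : Type*} [CommRing R] (a b c d : R) (hdet : a * d - b * c = 1)
    (ha : IsUnit a) (g₁ g₂ g₃ g₄ : R) :
    (!![1, 0; g₁, 1] * !![1, g₂; 0, 1] * !![1, 0; g₃, 1] * !![1, g₄; 0, 1]
        = !![a, b; c, d]) ↔
      (1 + g₂ * g₃ = a ∧ g₄ = Ring.inverse a * (b - g₂) ∧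
        g₁ = Ring.inverse a * (c - g₃)) := by
  have hia : Ring.inverse a * a = 1 := by
    rw [mul_comm]; exact Ring.mul_inverse_cancel a ha
  set i := Ring.inverse a with hi
  simp only [← Matrix.ext_iff, Fin.forall_fin_two, Matrix.mul_apply,
    Fin.sum_univ_two, Matrix.of_apply, Matrix.cons_val', Matrix.cons_val_zero,
    Matrix.cons_val_one, Matrix.head_cons, Matrix.empty_val',
    Matrix.cons_val_fin_one, Matrix.head_fin_const]
  constructor
  · rintro ⟨⟨h00, h01⟩, h10, h11⟩
    have ha' : 1 + g₂ * g₃ = a := by linear_combination h00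
    refine ⟨ha', ?_, ?_⟩
    · linear_combination i * h01 - i * g₄ * ha' - g₄ * hia
    · linear_combination i * h10 - i * g₁ * ha' - g₁ * hia
  · rintro ⟨h1, h4, h2⟩
    subst h4 h2
    refine ⟨⟨by linear_combination h1, ?_⟩, ?_, ?_⟩
    · linear_combination i * (b - g₂) * h1 + (b - g₂) * hia
    · linear_combination i * (c - g₃) * h1 + (c - g₃) * hia
    · linear_combination (d - 1) * hia - i * hdet - i * h1 +
        i * (b - g₂) * (i * (c - g₃) * h1 + (c - g₃) * hia)
end

section
/- Define a(z,w) = (zw−1)(zw−2) and b(z,w) = (zw−1)z + (zw−2)z² on ℂ². Suppose c, d : ℂ² → ℂ are continuous with a·d − b·c = 1 everywhere, and suppose g₁, g₂, g₃, g₄ : ℂ² → ℂ are continuous functions with L(g₁(x))·U(g₂(x))·L(g₃(x))·U(g₄(x)) = [[a(x), b(x)], [c(x), d(x)]] for all x ∈ ℂ². Then for all z ∈ ℂ with z ≠ 0: g₂(z, 1/z) = −z² and g₂(z, 2/z) = z. -/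
/-- With `a(z,w) = (zw-1)(zw-2)` and `b(z,w) = (zw-1)z + (zw-2)z²`, any continuous 4-factor
unitriangular factorization of a continuous matrix `[[a, b], [c, d]]` of determinant `1`
forces `g₂(z, 1/z) = -z²` and `g₂(z, 2/z) = z` for all `z ≠ 0`. -/
theorem stmt15
    (a b : ℂ × ℂ → ℂ)
    (ha : ∀ x : ℂ × ℂ, a x = (x.1 * x.2 - 1) * (x.1 * x.2 - 2))
    (hb : ∀ x : ℂ × ℂ, b x = (x.1 * x.2 - 1) * x.1 + (x.1 * x.2 - 2) * x.1 ^ 2)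
    (c d : ℂ × ℂ → ℂ) (hc : Continuous c) (hd : Continuous d)
    (hdet : ∀ x : ℂ × ℂ, a x * d x - b x * c x = 1)
    (g₁ g₂ g₃ g₄ : ℂ × ℂ → ℂ)
    (hg₁ : Continuous g₁) (hg₂ : Continuous g₂) (hg₃ : Continuous g₃) (hg₄ : Continuous g₄)
    (hfact : ∀ x : ℂ × ℂ,
      !![1, 0; g₁ x, 1] * !![1, g₂ x; 0, 1] * !![1, 0; g₃ x, 1] * !![1, g₄ x; 0, 1]
        = !![a x, b x; c x, d x]) :
    ∀ z : ℂ, z ≠ 0 → g₂ (z, 1 / z) = -z ^ 2 ∧ g₂ (z, 2 / z) = z := by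
  have key : ∀ x : ℂ × ℂ, a x = 0 → g₂ x = b x := by
    intro x hax
    have h00 := congrFun (congrFun (hfact x) 0) 0
    have h01 := congrFun (congrFun (hfact x) 0) 1
    simp [Matrix.mul_apply, Fin.sum_univ_succ] at h00 h01
    linear_combination h01 - g₄ x * h00 - g₄ x * hax
  intro z hz
  have h1 : z * (1 / z) = 1 := by field_simp
  have h2 : z * (2 / z) = 2 := by field_simp
  constructor
  · have := key (z, 1/z) (by rw [ha]; show (z*(1/z)-1)*(z*(1/z)-2) = 0; rw [h1]; ring)
    rw [hb] at this
    show g₂ (z, 1/z) = -z ^ 2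
    rw [this]
    show (z*(1/z)-1)*z + (z*(1/z)-2)*z^2 = -z^2
    rw [h1]; ring
  · have := key (z, 2/z) (by rw [ha]; show (z*(2/z)-1)*(z*(2/z)-2) = 0; rw [h2]; ring)
    rw [hb] at this
    show g₂ (z, 2/z) = z
    rw [this]
    show (z*(2/z)-1)*z + (z*(2/z)-2)*z^2 = z
    rw [h2]; ring
end

section
/- Define a(z,w) = (zw−1)(zw−2) and b(z,w) = (zw−1)z + (zw−2)z² on ℂ². There do not exist continuous functions c, d, g₁, g₂, g₃, g₄ : ℂ² → ℂ with a·d − b·c = 1 everywhere and L(g₁(x))·U(g₂(x))·L(g₃(x))·U(g₄(x)) = [[a(x), b(x)], [c(x), d(x)]] for all x ∈ ℂ². -/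
/-!
On the curve `zw = t`, `t ∈ [1, 2]`, the function `a = (t - 1)(t - 2)` is real and at most `0`.
The top row of `L(g₁) U(g₂) L(g₃) U(g₄)` is `(1 + g₂ g₃, (1 + g₂ g₃) g₄ + g₂)`, so
`g₂ g₃ = a - 1 ≠ 0` there, and `g₂ = b` where `a = 0`. Along the loops `(e^{iθ}, t e^{-iθ})`,
`g₂` is therefore a homotopy in `ℂ \ {0}` from `b = -e^{2iθ}` (at `t = 1`) to `b = e^{iθ}`
(at `t = 2`), which is impossible since these loops have winding numbers `2` and `1`.
Winding numbers are read off from a continuous logarithm of the homotopy, which exists because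
`exp : ℂ → ℂ \ {0}` is a covering map and the plane is simply connected.
-/

open Complex

theorem Complex.eq_of_continuous_of_exp_eq {X : Type*} [TopologicalSpace X] [PreconnectedSpace X]
    {f g : X → ℂ} (hf : Continuous f) (hg : Continuous g) (h : ∀ x, exp (f x) = exp (g x))
    {x₀ : X} (h₀ : f x₀ = g x₀) : f = g :=
  isCoveringMap_exp.eq_of_comp_eq hf hg (funext fun x ↦ Subtype.ext (h x)) x₀ h₀

theorem Complex.eq_of_continuous_of_exp_eq_one {X : Type*} [TopologicalSpace X]
    [PreconnectedSpace X] {K : X → ℂ} (hK : Continuous K) (h : ∀ x, exp (K x) = 1) (x y : X) :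
    K x = K y :=
  congr_fun (eq_of_continuous_of_exp_eq hK continuous_const (fun x ↦ by rw [h, h]) (x₀ := y) rfl) x

theorem Complex.exists_continuous_exp_eq {X : Type*} [TopologicalSpace X] [Nonempty X]
    [SimplyConnectedSpace X] [LocallyPathConnectedSpace X] {F : X → ℂ} (hF : Continuous F)
    (hF₀ : ∀ x, F x ≠ 0) : ∃ L : X → ℂ, Continuous L ∧ ∀ x, exp (L x) = F x := by
  obtain ⟨x₀⟩ := ‹Nonempty X›
  obtain ⟨L, ⟨-, hL⟩, -⟩ := isCoveringMapOn_exp.existsUnique_continuousMap_lifts ⟨F, hF⟩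
    (exp_log (hF₀ x₀)) hF₀
  exact ⟨L, L.continuous, congr_fun hL⟩

theorem Complex.sub_eq_of_exp_eq_mul_exp_pow {L : ℝ → ℂ} (hL : Continuous L) {c : ℂ} {m : ℕ}
    (h : ∀ θ : ℝ, exp (L θ) = c * exp (θ * I) ^ m) (θ : ℝ) : L θ - L 0 = m * θ * I := by
  have hc : exp (L 0) = c := by simpa using h 0
  have := eq_of_continuous_of_exp_eq (g := fun θ : ℝ ↦ L 0 + m * θ * I) hL (by fun_prop)
    (fun θ ↦ by rw [h, exp_add, hc, mul_assoc, exp_nat_mul]) (x₀ := 0) (by simp)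
  rw [congr_fun this θ]
  ring

theorem Complex.eq_of_homotopy_const_mul_exp_pow {F : ℝ × ℝ → ℂ} (hF : Continuous F)
    (hF₀ : ∀ p, F p ≠ 0) (hper : ∀ s, F (s, 2 * Real.pi) = F (s, 0)) {s₀ s₁ : ℝ} {c₀ c₁ : ℂ}
    {m n : ℕ} (h₀ : ∀ θ : ℝ, F (s₀, θ) = c₀ * exp (θ * I) ^ m)
    (h₁ : ∀ θ : ℝ, F (s₁, θ) = c₁ * exp (θ * I) ^ n) : m = n := by
  obtain ⟨L, hL, hLF⟩ := exists_continuous_exp_eq hF hF₀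
  have hincr : L (s₁, 2 * Real.pi) - L (s₁, 0) = L (s₀, 2 * Real.pi) - L (s₀, 0) :=
    eq_of_continuous_of_exp_eq_one (K := fun s ↦ L (s, 2 * Real.pi) - L (s, 0)) (by fun_prop)
      (fun s ↦ by rw [exp_sub, hLF, hLF, hper, div_self (hF₀ _)]) s₁ s₀
  have hm := sub_eq_of_exp_eq_mul_exp_pow (L := fun θ ↦ L (s₀, θ)) (by fun_prop)
    (fun θ ↦ (hLF _).trans (h₀ θ)) (2 * Real.pi)
  have hn := sub_eq_of_exp_eq_mul_exp_pow (L := fun θ ↦ L (s₁, θ)) (by fun_prop)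
    (fun θ ↦ (hLF _).trans (h₁ θ)) (2 * Real.pi)
  push_cast at hm hn
  have : (n : ℂ) * (2 * Real.pi * I) = m * (2 * Real.pi * I) := by
    linear_combination hincr - hn + hm
  exact_mod_cast (mul_right_cancel₀ (by simp [Real.pi_ne_zero]) this).symm

theorem Matrix.first_row_of_lower_upper_lower_upper_eq {R : Type*} [CommRing R]
    {g₁ g₂ g₃ g₄ a b c d : R}
    (h : !![1, 0; g₁, 1] * !![1, g₂; 0, 1] * !![1, 0; g₃, 1] * !![1, g₄; 0, 1] = !![a, b; c, d]) :
    a = 1 + g₂ * g₃ ∧ b = a * g₄ + g₂ := by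
  have h₀₀ := congr_fun₂ h 0 0
  have h₀₁ := congr_fun₂ h 0 1
  simp [Matrix.mul_apply, Fin.sum_univ_two] at h₀₀ h₀₁
  exact ⟨h₀₀.symm, by rw [← h₀₁, ← h₀₀]⟩

noncomputable def hyperbolaLoop (t θ : ℝ) : ℂ × ℂ := (exp (θ * I), t * exp (-(θ * I)))

theorem hyperbolaLoop_fst_mul_snd (t θ : ℝ) :
    (hyperbolaLoop t θ).1 * (hyperbolaLoop t θ).2 = t := by
  rw [hyperbolaLoop, mul_left_comm, ← exp_add, add_neg_cancel, exp_zero, mul_one]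

theorem hyperbolaLoop_two_pi (t : ℝ) : hyperbolaLoop t (2 * Real.pi) = hyperbolaLoop t 0 := by
  simp [hyperbolaLoop, exp_neg, exp_two_pi_mul_I]

/-- With `a(z,w) = (zw-1)(zw-2)` and `b(z,w) = (zw-1)z + (zw-2)z²`, there is no continuous
completion `[[a, b], [c, d]]` of determinant `1` admitting a continuous 4-factor
unitriangular factorization `L(g₁) U(g₂) L(g₃) U(g₄)`. -/
theorem stmt17
    (a b : ℂ × ℂ → ℂ)
    (ha : ∀ x : ℂ × ℂ, a x = (x.1 * x.2 - 1) * (x.1 * x.2 - 2))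
    (hb : ∀ x : ℂ × ℂ, b x = (x.1 * x.2 - 1) * x.1 + (x.1 * x.2 - 2) * x.1 ^ 2) :
    ¬ ∃ c d g₁ g₂ g₃ g₄ : ℂ × ℂ → ℂ,
      Continuous c ∧ Continuous d ∧
      Continuous g₁ ∧ Continuous g₂ ∧ Continuous g₃ ∧ Continuous g₄ ∧
      (∀ x : ℂ × ℂ, a x * d x - b x * c x = 1) ∧
      (∀ x : ℂ × ℂ,
        !![1, 0; g₁ x, 1] * !![1, g₂ x; 0, 1] * !![1, 0; g₃ x, 1] * !![1, g₄ x; 0, 1]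
          = !![a x, b x; c x, d x]) := by
  rintro ⟨c, d, g₁, g₂, g₃, g₄, -, -, -, hg₂, -, -, -, hmat⟩
  have hrow x := Matrix.first_row_of_lower_upper_lower_upper_eq (hmat x)
  have hg₂_ne (t : Set.Icc (1 : ℝ) 2) (θ : ℝ) : g₂ (hyperbolaLoop t θ) ≠ 0 := by
    intro h
    have ht : ((t - 1) * (t - 2) : ℝ) = 1 := by
      have := (ha (hyperbolaLoop t θ)).symm.trans (hrow _).1
      rw [h, hyperbolaLoop_fst_mul_snd, zero_mul, add_zero] at this
      exact_mod_cast this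
    nlinarith [t.2.1, t.2.2]
  have hg₂_eq_b (t θ : ℝ) (ht : t = 1 ∨ t = 2) :
      g₂ (hyperbolaLoop t θ) = b (hyperbolaLoop t θ) := by
    rw [(hrow _).2, ha, hyperbolaLoop_fst_mul_snd]
    rcases ht with rfl | rfl <;> norm_num
  -- clamping `t` to `[1, 2]` makes the homotopy defined on all of the simply connected `ℝ × ℝ`
  refine absurd (eq_of_homotopy_const_mul_exp_pow
    (F := fun p ↦ g₂ (hyperbolaLoop (Set.projIcc 1 2 one_le_two p.1) p.2))
    (by simp only [hyperbolaLoop]; fun_prop) (fun p ↦ hg₂_ne _ _)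
    (fun s ↦ by rw [hyperbolaLoop_two_pi]) (s₀ := 1) (c₀ := -1) (m := 2) (fun θ ↦ ?_)
    (s₁ := 2) (c₁ := 1) (n := 1) (fun θ ↦ ?_)) (by norm_num)
  · rw [Set.projIcc_left, hg₂_eq_b _ _ (.inl rfl), hb, hyperbolaLoop_fst_mul_snd]
    norm_num [hyperbolaLoop]
  · rw [Set.projIcc_right, hg₂_eq_b _ _ (.inr rfl), hb, hyperbolaLoop_fst_mul_snd]
    norm_num [hyperbolaLoop]
end
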